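/- arXiv:2006.07260 — 2 statements merged into one kernel-verified Lean document; each statement's English description precedes it below -/
import Mathlib

section
/- If all N cost matrices are equal to N·C for a single matrix C, then the discrete EOT value equals the standard optimal transport value: EOT_{(N·C,...,N·C)}(a,b) = W_C(a,b). -/
open Finset

/-- Frobenius inner product of two matrices. -/
def dot {n m : ℕ} (P C : Matrix (Fin n) (Fin m) ℝ) : ℝ := ∑ i, ∑ j, P i j * C i j

/-- `P` is a coupling of the probability vectors `a` and `b`. -/
def IsCoupling {n m : ℕ} (a : Fin n → ℝ) (b : Fin m → ℝ)
    (P : Matrix (Fin n) (Fin m) ℝ) : Prop :=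
  (∀ i j, 0 ≤ P i j) ∧ (∀ i, ∑ j, P i j = a i) ∧ (∀ j, ∑ i, P i j = b j)

/-- Discrete optimal transport value. -/
noncomputable def W {n m : ℕ} (a : Fin n → ℝ) (b : Fin m → ℝ)
    (C : Matrix (Fin n) (Fin m) ℝ) : ℝ :=
  sInf {t | ∃ P, IsCoupling a b P ∧ t = dot P C}

/-- The constraint set `Γ^N_{a,b}` of coupling decompositions. -/
def Gamma (N : ℕ) {n m : ℕ} (a : Fin n → ℝ) (b : Fin m → ℝ) :
    Set (Fin N → Matrix (Fin n) (Fin m) ℝ) :=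
  {P | (∀ k i j, 0 ≤ P k i j) ∧ (∀ i, ∑ k, ∑ j, P k i j = a i) ∧
       (∀ j, ∑ k, ∑ i, P k i j = b j)}

/-- Discrete equitable optimal transport value. -/
noncomputable def EOT {N n m : ℕ} (a : Fin n → ℝ) (b : Fin m → ℝ)
    (C : Fin N → Matrix (Fin n) (Fin m) ℝ) : ℝ :=
  sInf {t | ∃ P ∈ Gamma N a b, t = ⨆ i, dot (P i) (C i)}

/-!
Summing a decomposition `(P_k) ∈ Γ^N_{a,b}` gives a coupling whose `C`-cost `∑ ⟨P_k, C⟩` is at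
most `N · max_k ⟨P_k, C⟩ = max_k ⟨P_k, N C⟩`; conversely a coupling `Q` splits into `N` equal
parts `Q / N`, each of `N C`-cost `⟨Q, C⟩`. So every value of either problem is dominated by a
value of the other, and the two infima agree.
-/

lemma dot_smul_left {n m : ℕ} (c : ℝ) (P C : Matrix (Fin n) (Fin m) ℝ) :
    dot (c • P) C = c * dot P C := by
  simp only [dot, Matrix.smul_apply, smul_eq_mul, Finset.mul_sum, mul_assoc]

lemma dot_smul_right {n m : ℕ} (c : ℝ) (P C : Matrix (Fin n) (Fin m) ℝ) :
    dot P (c • C) = c * dot P C := by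
  simp only [dot, Matrix.smul_apply, smul_eq_mul, Finset.mul_sum, mul_left_comm]

lemma dot_sum_left {ι : Type*} [Fintype ι] {n m : ℕ} (P : ι → Matrix (Fin n) (Fin m) ℝ)
    (C : Matrix (Fin n) (Fin m) ℝ) : dot (∑ k, P k) C = ∑ k, dot (P k) C := by
  simp only [dot, Matrix.sum_apply, Finset.sum_mul]
  conv_rhs => rw [Finset.sum_comm]
  exact Finset.sum_congr rfl fun i _ => Finset.sum_comm

lemma sum_le_card_mul_ciSup {ι : Type*} [Fintype ι] (f : ι → ℝ) :
    ∑ i, f i ≤ Fintype.card ι * ⨆ i, f i := by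
  rw [← nsmul_eq_mul]
  exact Finset.sum_le_card_nsmul Finset.univ f _ fun i _ => le_ciSup (Set.finite_range f).bddAbove i

lemma isCoupling_sum_of_mem_Gamma {N n m : ℕ} {a : Fin n → ℝ} {b : Fin m → ℝ}
    {P : Fin N → Matrix (Fin n) (Fin m) ℝ} (hP : P ∈ Gamma N a b) :
    IsCoupling a b (∑ k, P k) := by
  obtain ⟨hnonneg, hrow, hcol⟩ := hP
  refine ⟨fun i j => ?_, fun i => ?_, fun j => ?_⟩
  · simpa only [Matrix.sum_apply] using Finset.sum_nonneg fun k _ => hnonneg k i j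
  · simp only [Matrix.sum_apply]
    rw [Finset.sum_comm, hrow]
  · simp only [Matrix.sum_apply]
    rw [Finset.sum_comm, hcol]

lemma const_inv_smul_mem_Gamma {N n m : ℕ} (hN : 0 < N) {a : Fin n → ℝ} {b : Fin m → ℝ}
    {Q : Matrix (Fin n) (Fin m) ℝ} (hQ : IsCoupling a b Q) :
    (fun _ : Fin N => (N : ℝ)⁻¹ • Q) ∈ Gamma N a b := by
  obtain ⟨hnonneg, hrow, hcol⟩ := hQ
  have hN' : (N : ℝ) ≠ 0 := by positivity
  refine ⟨fun _ i j => ?_, fun i => ?_, fun j => ?_⟩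
  · exact mul_nonneg (by positivity) (hnonneg i j)
  · simp only [Matrix.smul_apply, smul_eq_mul, ← Finset.mul_sum, hrow, Finset.sum_const,
      Finset.card_fin, nsmul_eq_mul]
    exact inv_mul_cancel_left₀ hN' _
  · simp only [Matrix.smul_apply, smul_eq_mul, ← Finset.mul_sum, hcol, Finset.sum_const,
      Finset.card_fin, nsmul_eq_mul]
    exact inv_mul_cancel_left₀ hN' _

theorem stmt_4_general (N n m : ℕ) (hN : 0 < N) (a : Fin n → ℝ) (b : Fin m → ℝ)
    (C : Matrix (Fin n) (Fin m) ℝ) :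
    EOT a b (fun _ : Fin N => (N : ℝ) • C) = W a b C := by
  have : Nonempty (Fin N) := ⟨⟨0, hN⟩⟩
  apply csInf_eq_csInf_of_forall_exists_le
  · rintro _ ⟨P, hP, rfl⟩
    refine ⟨_, ⟨_, isCoupling_sum_of_mem_Gamma hP, rfl⟩, ?_⟩
    simpa only [dot_sum_left, dot_smul_right, Fintype.card_fin,
      Real.mul_iSup_of_nonneg N.cast_nonneg] using sum_le_card_mul_ciSup fun k => dot (P k) C
  · rintro _ ⟨Q, hQ, rfl⟩
    refine ⟨_, ⟨_, const_inv_smul_mem_Gamma hN hQ, rfl⟩, le_of_eq ?_⟩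
    rw [ciSup_const, dot_smul_left, dot_smul_right, inv_mul_cancel_left₀ (by positivity)]

/-- If all `N` cost matrices equal `N • C`, then discrete EOT equals standard OT. -/
theorem stmt_4 (N n m : ℕ) (hN : 0 < N) (a : Fin n → ℝ) (b : Fin m → ℝ)
    (ha : a ∈ stdSimplex ℝ (Fin n)) (hb : b ∈ stdSimplex ℝ (Fin m))
    (C : Matrix (Fin n) (Fin m) ℝ) (hC : ∀ k l, 0 ≤ C k l) :
    EOT a b (fun _ : Fin N => (N : ℝ) • C) = W a b C :=
  stmt_4_general N n m hN a b C
end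

section
/- Discrete EOT equals the supremum over λ in the simplex of Wasserstein costs with the min-cost: EOT_C(a,b) = sup_{λ∈Δ_N} W_{C_λ}(a,b) where (C_λ)_{kl} = min_i λ_i (C_i)_{kl}. -/
/-!
Weak duality: for `P ∈ Γ` the coupling `∑ₖ Pₖ` costs at most `∑ₖ λₖ ⟨Pₖ, Cₖ⟩ ≤ maxₖ ⟨Pₖ, Cₖ⟩`
against `C_λ`. Conversely, splitting a coupling along a pointwise minimiser of `k ↦ λₖ Cₖ` shows
that `W_{C_λ}(a, b) = inf_{P ∈ Γ} ∑ₖ λₖ ⟨Pₖ, Cₖ⟩`. The cost vectors `(⟨Pₖ, Cₖ⟩)ₖ`, `P ∈ Γ`, form a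
convex set all of whose points have a coordinate `≥ EOT`; separating it from the open orthant
below `EOT` gives a functional with nonnegative coefficients, which normalise to the optimal `λ`.
-/

open Finset

section Separation

variable {ι : Type*}

theorem LinearMap.apply_nonneg_of_forall_lt {f : (ι → ℝ) →ₗ[ℝ] ℝ} {u v : ℝ}
    (hf : ∀ y : ι → ℝ, (∀ k, y k < v) → f y < u) {e : ι → ℝ} (he : 0 ≤ e) : 0 ≤ f e := by
  -- Moving from `y₀` in the direction `-e` stays in the orthant, but `f` grows without bound.
  by_contra! hneg
  set y₀ : ι → ℝ := fun _ => v - 1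
  have hy₀ : f y₀ < u := hf y₀ fun _ => by simp [y₀]
  set t := (u - f y₀) / -f e
  have ht : 0 ≤ t := div_nonneg (by linarith) (by linarith)
  have hlt := hf (y₀ - t • e) fun k => by
    have := mul_nonneg ht (he k)
    simp only [Pi.sub_apply, Pi.smul_apply, smul_eq_mul, y₀]
    linarith
  have hte : t * f e = f y₀ - u := by
    have : t * -f e = u - f y₀ := div_mul_cancel₀ _ (neg_ne_zero.2 hneg.ne)
    linarith [mul_neg t (f e)]
  rw [map_sub, map_smul, smul_eq_mul, hte] at hlt
  linarith

theorem exists_mem_stdSimplex_le_sum_mul [Fintype ι] [Nonempty ι] {T : Set (ι → ℝ)}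
    (hTc : Convex ℝ T) (hTne : T.Nonempty) {v : ℝ} (hT : ∀ y ∈ T, v ≤ ⨆ k, y k) :
    ∃ l ∈ stdSimplex ℝ ι, ∀ y ∈ T, v ≤ ∑ k, l k * y k := by
  classical
  have hdisj : Disjoint (Set.univ.pi fun _ : ι => Set.Iio v) T := by
    refine Set.disjoint_left.2 fun y hyU hyT => ?_
    obtain ⟨k, hk⟩ := exists_eq_ciSup_of_finite (f := y)
    exact (hT y hyT).not_gt (hk ▸ hyU k (Set.mem_univ k))
  obtain ⟨f, u, hfU, hfT⟩ := geometric_hahn_banach_open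
    (convex_pi fun _ _ => convex_Iio v) (isOpen_set_pi Set.finite_univ fun _ _ => isOpen_Iio)
    hTc hdisj
  set g : (ι → ℝ) →ₗ[ℝ] ℝ := f.toLinearMap
  have hgU : ∀ y : ι → ℝ, (∀ k, y k < v) → g y < u := fun y hy => hfU y fun k _ => hy k
  have hgT : ∀ y ∈ T, u ≤ g y := hfT
  set c : ι → ℝ := fun k => g fun j => if k = j then 1 else 0
  have hgc : ∀ y, g y = ∑ k, y k * c k := g.pi_apply_eq_sum_univ
  have hc : ∀ k, 0 ≤ c k := fun k =>
    LinearMap.apply_nonneg_of_forall_lt hgU fun j => by positivity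
  have hcsum : 0 < ∑ k, c k := by
    refine (sum_nonneg fun k _ => hc k).lt_of_ne fun hzero => ?_
    have hg0 : ∀ y, g y = 0 := fun y => by
      rw [hgc]
      exact sum_eq_zero fun k _ => by
        rw [(sum_eq_zero_iff_of_nonneg fun k _ => hc k).1 hzero.symm k (mem_univ k), mul_zero]
    obtain ⟨y, hy⟩ := hTne
    linarith [hgT y hy, hgU (fun _ => v - 1) fun _ => by linarith, hg0 y, hg0 fun _ => v - 1]
  refine ⟨fun k => c k / ∑ k, c k, ⟨fun k => div_nonneg (hc k) hcsum.le, ?_⟩, fun y hy => ?_⟩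
  · rw [← sum_div, div_self hcsum.ne']
  refine le_of_forall_pos_lt_add fun δ hδ => ?_
  have hlow : (v - δ) * ∑ k, c k < u := by
    have := hgU (fun _ => v - δ) fun _ => by linarith
    rwa [hgc, ← mul_sum] at this
  have hup : u ≤ ∑ k, y k * c k := hgc y ▸ hgT y hy
  have : ∑ k, c k / (∑ j, c j) * y k = (∑ k, y k * c k) / ∑ k, c k := by
    rw [sum_div]; exact sum_congr rfl fun k _ => by ring
  rw [this, ← sub_lt_iff_lt_add, lt_div_iff₀ hcsum]
  linarith

end Separation

section Transport

variable {N n m : ℕ} {a : Fin n → ℝ} {b : Fin m → ℝ}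

theorem IsCoupling.le_left {P : Matrix (Fin n) (Fin m) ℝ} (hP : IsCoupling a b P)
    (i : Fin n) (j : Fin m) : P i j ≤ a i :=
  hP.2.1 i ▸ single_le_sum (fun j' _ => hP.1 i j') (mem_univ j)

theorem isCoupling_vecMulVec (ha : a ∈ stdSimplex ℝ (Fin n)) (hb : b ∈ stdSimplex ℝ (Fin m)) :
    IsCoupling a b (Matrix.vecMulVec a b) := by
  refine ⟨fun i j => mul_nonneg (ha.1 i) (hb.1 j), fun i => ?_, fun j => ?_⟩
  · simp [Matrix.vecMulVec_apply, ← mul_sum, hb.2]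
  · simp [Matrix.vecMulVec_apply, ← sum_mul, ha.2]

theorem bddBelow_dot_couplings (C : Matrix (Fin n) (Fin m) ℝ) :
    BddBelow {t | ∃ P, IsCoupling a b P ∧ t = dot P C} := by
  refine ⟨-∑ i, ∑ j, a i * |C i j|, ?_⟩
  rintro _ ⟨P, hP, rfl⟩
  simp only [dot, ← sum_neg_distrib]
  refine sum_le_sum fun i _ => sum_le_sum fun j _ => ?_
  calc -(a i * |C i j|) ≤ -(P i j * |C i j|) :=
        neg_le_neg (mul_le_mul_of_nonneg_right (hP.le_left i j) (abs_nonneg _))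
    _ ≤ P i j * C i j := by
        rw [← mul_neg]; exact mul_le_mul_of_nonneg_left (neg_abs_le _) (hP.1 i j)

theorem W_le_dot {C Q : Matrix (Fin n) (Fin m) ℝ} (hQ : IsCoupling a b Q) :
    W a b C ≤ dot Q C :=
  csInf_le (bddBelow_dot_couplings C) ⟨Q, hQ, rfl⟩

theorem le_W (ha : a ∈ stdSimplex ℝ (Fin n)) (hb : b ∈ stdSimplex ℝ (Fin m))
    {C : Matrix (Fin n) (Fin m) ℝ} {r : ℝ} (h : ∀ Q, IsCoupling a b Q → r ≤ dot Q C) :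
    r ≤ W a b C :=
  le_csInf ⟨_, _, isCoupling_vecMulVec ha hb, rfl⟩ fun _ ⟨Q, hQ, hr⟩ => hr ▸ h Q hQ

theorem mem_Gamma_iff {P : Fin N → Matrix (Fin n) (Fin m) ℝ} :
    P ∈ Gamma N a b ↔ (∀ k i j, 0 ≤ P k i j) ∧ IsCoupling a b (∑ k, P k) := by
  have hrow : ∀ i, ∑ j, (∑ k, P k) i j = ∑ k, ∑ j, P k i j := fun i => by
    simp only [Matrix.sum_apply]; exact sum_comm
  have hcol : ∀ j, ∑ i, (∑ k, P k) i j = ∑ k, ∑ i, P k i j := fun j => by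
    simp only [Matrix.sum_apply]; exact sum_comm
  simp only [IsCoupling, hrow, hcol]
  refine ⟨fun ⟨h0, hr, hc⟩ => ⟨h0, fun i j => ?_, hr, hc⟩, fun ⟨h0, _, hr, hc⟩ => ⟨h0, hr, hc⟩⟩
  rw [Matrix.sum_apply]
  exact sum_nonneg fun k _ => h0 k i j

def splitAlong (Q : Matrix (Fin n) (Fin m) ℝ) (σ : Fin n → Fin m → Fin N) :
    Fin N → Matrix (Fin n) (Fin m) ℝ :=
  fun k i j => if σ i j = k then Q i j else 0

theorem sum_splitAlong_mul (Q : Matrix (Fin n) (Fin m) ℝ) (σ : Fin n → Fin m → Fin N)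
    (f : Fin N → ℝ) (i : Fin n) (j : Fin m) :
    ∑ k, splitAlong Q σ k i j * f k = Q i j * f (σ i j) := by
  simp [splitAlong, ite_mul]

theorem splitAlong_mem_Gamma {Q : Matrix (Fin n) (Fin m) ℝ} (hQ : IsCoupling a b Q)
    (σ : Fin n → Fin m → Fin N) : splitAlong Q σ ∈ Gamma N a b := by
  have hsum : ∑ k, splitAlong Q σ k = Q := by
    ext i j
    simpa [Matrix.sum_apply] using sum_splitAlong_mul Q σ 1 i j
  refine mem_Gamma_iff.2 ⟨fun k i j => ?_, by rwa [hsum]⟩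
  unfold splitAlong
  split_ifs
  exacts [hQ.1 i j, le_rfl]

theorem Gamma_nonempty [Nonempty (Fin N)] (ha : a ∈ stdSimplex ℝ (Fin n))
    (hb : b ∈ stdSimplex ℝ (Fin m)) : (Gamma N a b).Nonempty :=
  ⟨_, splitAlong_mem_Gamma (isCoupling_vecMulVec ha hb) fun _ _ => Classical.arbitrary _⟩

theorem convex_Gamma : Convex ℝ (Gamma N a b) := by
  rintro P ⟨hP0, hPa, hPb⟩ Q ⟨hQ0, hQa, hQb⟩ s t hs ht hst
  refine ⟨fun k i j => ?_, fun i => ?_, fun j => ?_⟩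
  · simp only [Pi.add_apply, Pi.smul_apply, Matrix.add_apply, Matrix.smul_apply, smul_eq_mul]
    exact add_nonneg (mul_nonneg hs (hP0 k i j)) (mul_nonneg ht (hQ0 k i j))
  all_goals
    simp only [Pi.add_apply, Pi.smul_apply, Matrix.add_apply, Matrix.smul_apply, smul_eq_mul,
      sum_add_distrib, ← mul_sum, hPa, hQa, hPb, hQb]
    rw [← add_mul, hst, one_mul]

noncomputable def minCost (l : Fin N → ℝ) (C : Fin N → Matrix (Fin n) (Fin m) ℝ) :
    Matrix (Fin n) (Fin m) ℝ :=
  fun i j => ⨅ k, l k * C k i j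

theorem sum_mul_dot_eq (l : Fin N → ℝ) (P C : Fin N → Matrix (Fin n) (Fin m) ℝ) :
    ∑ k, l k * dot (P k) (C k) = ∑ i, ∑ j, ∑ k, P k i j * (l k * C k i j) := by
  simp only [dot, mul_sum]
  rw [sum_comm]
  refine sum_congr rfl fun i _ => ?_
  rw [sum_comm]
  exact sum_congr rfl fun j _ => sum_congr rfl fun k _ => by ring

theorem W_minCost_le_sum_mul_dot (l : Fin N → ℝ) (C : Fin N → Matrix (Fin n) (Fin m) ℝ)
    {P : Fin N → Matrix (Fin n) (Fin m) ℝ} (hP : P ∈ Gamma N a b) :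
    W a b (minCost l C) ≤ ∑ k, l k * dot (P k) (C k) := by
  obtain ⟨hP0, hPQ⟩ := mem_Gamma_iff.1 hP
  refine (W_le_dot hPQ).trans ?_
  rw [sum_mul_dot_eq]
  refine sum_le_sum fun i _ => sum_le_sum fun j _ => ?_
  rw [Matrix.sum_apply, sum_mul]
  exact sum_le_sum fun k _ =>
    mul_le_mul_of_nonneg_left (ciInf_le (Finite.bddBelow_range _) k) (hP0 k i j)

theorem exists_mem_Gamma_dot_minCost_eq [Nonempty (Fin N)] (l : Fin N → ℝ)
    (C : Fin N → Matrix (Fin n) (Fin m) ℝ) {Q : Matrix (Fin n) (Fin m) ℝ}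
    (hQ : IsCoupling a b Q) :
    ∃ P ∈ Gamma N a b, dot Q (minCost l C) = ∑ k, l k * dot (P k) (C k) := by
  choose σ hσ using fun i j => exists_eq_ciInf_of_finite (f := fun k => l k * C k i j)
  refine ⟨splitAlong Q σ, splitAlong_mem_Gamma hQ σ, ?_⟩
  rw [sum_mul_dot_eq]
  refine sum_congr rfl fun i _ => sum_congr rfl fun j _ => ?_
  rw [sum_splitAlong_mul Q σ (fun k => l k * C k i j), hσ]
  rfl

theorem le_W_minCost [Nonempty (Fin N)] (ha : a ∈ stdSimplex ℝ (Fin n))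
    (hb : b ∈ stdSimplex ℝ (Fin m)) {l : Fin N → ℝ} {C : Fin N → Matrix (Fin n) (Fin m) ℝ}
    {r : ℝ} (h : ∀ P ∈ Gamma N a b, r ≤ ∑ k, l k * dot (P k) (C k)) :
    r ≤ W a b (minCost l C) :=
  le_W ha hb fun _ hQ =>
    let ⟨P, hP, hPQ⟩ := exists_mem_Gamma_dot_minCost_eq l C hQ
    hPQ ▸ h P hP

theorem W_minCost_le_iSup_dot {l : Fin N → ℝ} (hl : l ∈ stdSimplex ℝ (Fin N))
    (C : Fin N → Matrix (Fin n) (Fin m) ℝ) {P : Fin N → Matrix (Fin n) (Fin m) ℝ}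
    (hP : P ∈ Gamma N a b) : W a b (minCost l C) ≤ ⨆ k, dot (P k) (C k) :=
  calc W a b (minCost l C) ≤ ∑ k, l k * dot (P k) (C k) := W_minCost_le_sum_mul_dot l C hP
    _ ≤ ∑ k, l k * ⨆ k, dot (P k) (C k) := sum_le_sum fun k _ =>
        mul_le_mul_of_nonneg_left
          (le_ciSup (f := fun k => dot (P k) (C k)) (Finite.bddAbove_range _) k) (hl.1 k)
    _ = ⨆ k, dot (P k) (C k) := by rw [← sum_mul, hl.2, one_mul]

theorem EOT_le_iSup_dot [Nonempty (Fin N)] (C : Fin N → Matrix (Fin n) (Fin m) ℝ)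
    {P : Fin N → Matrix (Fin n) (Fin m) ℝ} (hP : P ∈ Gamma N a b) :
    EOT a b C ≤ ⨆ k, dot (P k) (C k) :=
  csInf_le ⟨_, fun _ ⟨_, hP', ht⟩ => ht ▸ W_minCost_le_iSup_dot
    (single_mem_stdSimplex ℝ (Classical.arbitrary _)) C hP'⟩ ⟨P, hP, rfl⟩

theorem W_minCost_le_EOT [Nonempty (Fin N)] (ha : a ∈ stdSimplex ℝ (Fin n))
    (hb : b ∈ stdSimplex ℝ (Fin m)) {l : Fin N → ℝ} (hl : l ∈ stdSimplex ℝ (Fin N))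
    (C : Fin N → Matrix (Fin n) (Fin m) ℝ) : W a b (minCost l C) ≤ EOT a b C :=
  le_csInf (let ⟨P, hP⟩ := Gamma_nonempty ha hb; ⟨_, P, hP, rfl⟩)
    fun _ ⟨_, hP, ht⟩ => ht ▸ W_minCost_le_iSup_dot hl C hP

def costVector (C : Fin N → Matrix (Fin n) (Fin m) ℝ) :
    (Fin N → Matrix (Fin n) (Fin m) ℝ) →ₗ[ℝ] Fin N → ℝ where
  toFun P k := dot (P k) (C k)
  map_add' P Q := by ext k; simp [dot, add_mul, sum_add_distrib]
  map_smul' s P := by ext k; simp [dot, mul_sum, mul_assoc]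

end Transport

/-- `EOT_C(a,b) = sup_{λ∈Δ_N} W_{C_λ}(a,b)` with `(C_λ)_{kl} = min_i λᵢ(C_i)_{kl}`. -/
theorem stmt_9 (N n m : ℕ) (hN : 0 < N) (a : Fin n → ℝ) (b : Fin m → ℝ)
    (ha : a ∈ stdSimplex ℝ (Fin n)) (hb : b ∈ stdSimplex ℝ (Fin m))
    (C : Fin N → Matrix (Fin n) (Fin m) ℝ) :
    EOT a b C =
      sSup {t | ∃ l ∈ stdSimplex ℝ (Fin N),
        t = W a b (fun k j => ⨅ i, l i * C i k j)} := by
  have : Nonempty (Fin N) := ⟨⟨0, hN⟩⟩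
  change EOT a b C = sSup {t | ∃ l ∈ stdSimplex ℝ (Fin N), t = W a b (minCost l C)}
  have hle : ∀ t ∈ {t | ∃ l ∈ stdSimplex ℝ (Fin N), t = W a b (minCost l C)}, t ≤ EOT a b C :=
    fun _ ⟨_, hl, ht⟩ => ht ▸ W_minCost_le_EOT ha hb hl C
  obtain ⟨l, hl, hlC⟩ := exists_mem_stdSimplex_le_sum_mul
    (convex_Gamma.linear_image (costVector C)) ((Gamma_nonempty ha hb).image _)
    (v := EOT a b C) fun _ ⟨P, hP, hy⟩ => hy ▸ EOT_le_iSup_dot C hP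
  refine le_antisymm (le_csSup_of_le ⟨_, hle⟩ ⟨l, hl, rfl⟩ ?_)
    (csSup_le ⟨_, _, single_mem_stdSimplex ℝ (Classical.arbitrary _), rfl⟩ hle)
  exact le_W_minCost ha hb fun P hP => hlC _ ⟨P, hP, rfl⟩
end
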